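/- For all integers 1 ≤ s < k ≤ n and every real θ₂ > 0, the function ρ ↦ (θ₂/s)·(k/n)·C(n−1,s)^{-1}·B(n,s,ρ) tends to (k/n)·(θ₂/s) as ρ → 0⁺; moreover, if k < n then this limit (k/n)·(θ₂/s) is strictly smaller than the classical expected site frequency θ₂/s. In particular, for k = n the expected conditional site frequency spectrum converges to the classical spectrum θ₂/s as ρ → 0, while for k < n it does not. -/

import Mathlib

/-!
At `ρ = 0` every weight `(j+1)/(j+1+ρ)` equals `1`, so `B(n,s,0) = C(n-1,s)` by the hockey-stick
identity; since `B n s` is continuous at `0`, the normalized spectrum tends to `(k/n)·(θ₂/s)`.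
-/

open Finset

/-- `B n s ρ = Σ_{j=0}^{n-s-1} ((j+1)/(j+1+ρ))·C(n−j−2, s−1)`. -/
noncomputable def B (n s : ℕ) (ρ : ℝ) : ℝ :=
  ∑ j ∈ Finset.range (n - s), ((j : ℝ) + 1) / ((j : ℝ) + 1 + ρ) * ((n - j - 2).choose (s - 1) : ℝ)

-- The hockey-stick identity with the summation index reversed.
lemma sum_range_choose_sub_sub {n s : ℕ} (hs : 1 ≤ s) (hsn : s < n) :
    ∑ j ∈ range (n - s), (n - j - 2).choose (s - 1) = (n - 1).choose s := by
  obtain ⟨r, rfl⟩ : ∃ r, s = r + 1 := ⟨s - 1, by omega⟩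
  obtain ⟨m, rfl⟩ : ∃ m, n = r + 1 + m + 1 := ⟨n - r - 2, by omega⟩
  rw [show r + 1 + m + 1 - (r + 1) = m + 1 by omega, ← sum_range_reflect]
  convert Nat.sum_range_add_choose m r using 2 with j hj
  · rw [mem_range] at hj
    congr 1
    omega
  · omega

lemma B_zero {n s : ℕ} (hs : 1 ≤ s) (hsn : s < n) : B n s 0 = (n - 1).choose s := by
  have hterm : ∀ j : ℕ, ((j : ℝ) + 1) / ((j : ℝ) + 1 + 0) = 1 := fun j => by
    rw [add_zero, div_self (by positivity)]
  simp only [B, hterm, one_mul]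
  exact_mod_cast sum_range_choose_sub_sub hs hsn

lemma continuousAt_B (n s : ℕ) {ρ : ℝ} (hρ : -1 < ρ) : ContinuousAt (B n s) ρ := by
  refine tendsto_finsetSum _ fun j _ => ?_
  have hden : (j : ℝ) + 1 + ρ ≠ 0 := by
    have : (0 : ℝ) ≤ j := j.cast_nonneg
    linarith
  exact (continuousAt_const.div (by fun_prop) hden).mul continuousAt_const

/-- as `ρ → 0⁺` the expected conditional site frequency tends to
`(k/n)·(θ₂/s)`, and for `k < n` this limit is strictly smaller than the classical value
`θ₂/s`. -/
theorem stmt15 (n k s : ℕ) (hs : 1 ≤ s) (hsk : s < k) (hkn : k ≤ n) (θ₂ : ℝ) (hθ : 0 < θ₂) :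
    Filter.Tendsto
      (fun ρ : ℝ =>
        θ₂ / (s : ℝ) * ((k : ℝ) / (n : ℝ)) * (((n - 1).choose s : ℝ))⁻¹ * B n s ρ)
      (nhdsWithin 0 (Set.Ioi 0))
      (nhds ((k : ℝ) / (n : ℝ) * (θ₂ / (s : ℝ)))) ∧
    (k < n → (k : ℝ) / (n : ℝ) * (θ₂ / (s : ℝ)) < θ₂ / (s : ℝ)) := by
  have hsn : s < n := hsk.trans_le hkn
  constructor
  · have hC : ((n - 1).choose s : ℝ) ≠ 0 := by
      exact_mod_cast (Nat.choose_pos (by omega : s ≤ n - 1)).ne'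
    have hB := (continuousAt_B n s (by norm_num : (-1 : ℝ) < 0)).tendsto.mono_left
      (nhdsWithin_le_nhds (s := Set.Ioi 0))
    rw [B_zero hs hsn] at hB
    convert hB.const_mul (θ₂ / s * (k / n) * ((n - 1).choose s : ℝ)⁻¹) using 2
    field_simp
  · intro hkn'
    have hfrac : (k : ℝ) / n < 1 :=
      (div_lt_one (by exact_mod_cast (Nat.zero_le k).trans_lt hkn')).2 (by exact_mod_cast hkn')
    exact mul_lt_of_lt_one_left (by positivity) hfrac
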